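/- arXiv:1211.0204 — 3 statements merged into one kernel-verified Lean document; each statement's English description precedes it below -/
import Mathlib

section
/- Let M be a nonnegative m×m matrix, λ > 0, and v ∈ ℝᵐ a nonnegative vector with Mv ≤ λv entrywise and v̌ ≠ 0, where v̌ is the subvector of v indexed by a subset I ⊆ {1,…,m}. Suppose the principal submatrix N of M indexed by I is irreducible, and that for some p ≥ 1 and some i ∈ I we have (M^p v)_i < λ^p v_i. Then the Perron–Frobenius eigenvalue of N is strictly less than λ. -/
/-- A nonnegative square matrix is irreducible if for every pair of indices
some positive power has a strictly positive corresponding entry. -/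
def MatIrreducible {n : Type*} [Fintype n] [DecidableEq n]
    (N : Matrix n n ℝ) : Prop :=
  ∀ i j : n, ∃ p : ℕ, 1 ≤ p ∧ 0 < (N ^ p) i j

/-- The Perron–Frobenius eigenvalue of a nonnegative irreducible matrix:
the supremum of real eigenvalues admitting a nonzero nonnegative eigenvector
(by Perron–Frobenius theory this is the spectral radius). -/
noncomputable def perronEig {n : Type*} [Fintype n] [DecidableEq n]
    (N : Matrix n n ℝ) : ℝ :=
  sSup {r : ℝ | ∃ v : n → ℝ, v ≠ 0 ∧ (∀ i, 0 ≤ v i) ∧ N.mulVec v = r • v}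


open Matrix

section aux
variable {n : Type*} [Fintype n] [DecidableEq n]

lemma auxPowNonneg (N : Matrix n n ℝ) (h : ∀ i j, 0 ≤ N i j) (q : ℕ) :
    ∀ i j, 0 ≤ (N ^ q) i j := by
  induction q with
  | zero =>
    intro i j
    rw [pow_zero, Matrix.one_apply]
    split <;> norm_num
  | succ q ih =>
    intro i j
    rw [pow_succ, Matrix.mul_apply]
    exact Finset.sum_nonneg fun k _ => mul_nonneg (ih i k) (h k j)

lemma auxMulVecNonneg (N : Matrix n n ℝ) (h : ∀ i j, 0 ≤ N i j)
    (w : n → ℝ) (hw : ∀ i, 0 ≤ w i) : ∀ i, 0 ≤ N.mulVec w i := fun i =>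
  Finset.sum_nonneg fun k _ => mul_nonneg (h i k) (hw k)

lemma auxEigPow (N : Matrix n n ℝ) (w : n → ℝ) (r : ℝ)
    (h : N.mulVec w = r • w) (q : ℕ) : (N ^ q).mulVec w = r ^ q • w := by
  induction q with
  | zero => simp [Matrix.one_mulVec]
  | succ q ih =>
    rw [pow_succ', ← Matrix.mulVec_mulVec, ih, Matrix.mulVec_smul, h, smul_smul, ← pow_succ]

lemma auxSubinv (N : Matrix n n ℝ) (h : ∀ i j, 0 ≤ N i j) (l : ℝ) (hl : 0 ≤ l)
    (u : n → ℝ) (hu : ∀ i, 0 ≤ u i) (hsub : ∀ i, N.mulVec u i ≤ l * u i)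
    (q : ℕ) : ∀ i, (N ^ q).mulVec u i ≤ l ^ q * u i := by
  induction q with
  | zero => intro i; simp [Matrix.one_mulVec]
  | succ q ih =>
    intro i
    rw [pow_succ', ← Matrix.mulVec_mulVec]
    calc N.mulVec ((N ^ q).mulVec u) i
        ≤ N.mulVec (fun j => l ^ q * u j) i := by
          exact Finset.sum_le_sum fun k _ =>
            mul_le_mul_of_nonneg_left (ih k) (h i k)
      _ = l ^ q * N.mulVec u i := by
          simp only [Matrix.mulVec, dotProduct, Finset.mul_sum]
          exact Finset.sum_congr rfl fun k _ => by ring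
      _ ≤ l ^ q * (l * u i) := by
          exact mul_le_mul_of_nonneg_left (hsub i) (pow_nonneg hl q)
      _ = l ^ (q + 1) * u i := by ring

end aux
theorem stmt6 {m : ℕ} (M : Matrix (Fin m) (Fin m) ℝ)
    (hM : ∀ i j, 0 ≤ M i j) (l : ℝ) (hl : 0 < l)
    (v : Fin m → ℝ) (hvnn : ∀ i, 0 ≤ v i)
    (hsub : ∀ i, M.mulVec v i ≤ l * v i)
    (I : Finset (Fin m))
    -- the principal submatrix of `M` indexed by `I`
    (N : Matrix I I ℝ) (hNdef : ∀ a b : I, N a b = M a b)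
    -- the subvector of `v` indexed by `I`
    (vc : I → ℝ) (hvc : ∀ a : I, vc a = v a)
    (hvc0 : vc ≠ 0)
    (hirr : MatIrreducible N)
    (hstrict : ∃ p : ℕ, 1 ≤ p ∧ ∃ i : I, (M ^ p).mulVec v i < l ^ p * v i) :
    perronEig N < l := by
  classical
  have hNnn : ∀ a b : I, 0 ≤ N a b := fun a b => (hNdef a b) ▸ hM a b
  have hvcnn : ∀ a : I, 0 ≤ vc a := fun a => (hvc a) ▸ hvnn a
  obtain ⟨i0, hi0⟩ : ∃ a : I, 0 < vc a := by
    by_contra h; push_neg at h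
    exact hvc0 (funext fun a => le_antisymm (h a) (hvcnn a))
  haveI hIne : Nonempty I := ⟨i0⟩
  -- comparison of powers with the big matrix
  have hcomp : ∀ q : ℕ, ∀ a : I, (N ^ q).mulVec vc a ≤ (M ^ q).mulVec v a := by
    intro q
    induction q with
    | zero => intro a; simp [Matrix.one_mulVec, hvc a]
    | succ q ih =>
      intro a
      have hMqnn : ∀ j, 0 ≤ (M ^ q).mulVec v j :=
        auxMulVecNonneg _ (auxPowNonneg M hM q) v hvnn
      rw [pow_succ', ← Matrix.mulVec_mulVec]
      rw [pow_succ' M, ← Matrix.mulVec_mulVec]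
      calc N.mulVec ((N ^ q).mulVec vc) a
          ≤ ∑ b : I, M a b * (M ^ q).mulVec v b := by
            refine Finset.sum_le_sum fun b _ => ?_
            show N a b * (N ^ q).mulVec vc b ≤ M a b * (M ^ q).mulVec v b
            rw [hNdef a b]
            exact mul_le_mul_of_nonneg_left (ih b) (hM a b)
        _ = ∑ j ∈ I, M a j * (M ^ q).mulVec v j := by
            rw [← Finset.sum_coe_sort I (fun j => M a j * (M ^ q).mulVec v j)]
        _ ≤ ∑ j : Fin m, M a j * (M ^ q).mulVec v j := by
            refine Finset.sum_le_sum_of_subset_of_nonneg (Finset.subset_univ I)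
              fun j _ _ => mul_nonneg (hM a j) (hMqnn j)
        _ = M.mulVec ((M ^ q).mulVec v) a := rfl
  have hMsub : ∀ q : ℕ, ∀ i, (M ^ q).mulVec v i ≤ l ^ q * v i :=
    fun q => auxSubinv M hM l hl.le v hvnn hsub q
  have hNsub : ∀ q : ℕ, ∀ a : I, (N ^ q).mulVec vc a ≤ l ^ q * vc a := by
    intro q a
    calc (N ^ q).mulVec vc a ≤ (M ^ q).mulVec v a := hcomp q a
      _ ≤ l ^ q * v a := hMsub q a
      _ = l ^ q * vc a := by rw [hvc a]
  -- positivity of the subvector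
  have hvcpos : ∀ a : I, 0 < vc a := by
    intro a
    obtain ⟨p, hp1, hp⟩ := hirr a i0
    have h1 : (N ^ p) a i0 * vc i0 ≤ (N ^ p).mulVec vc a :=
      Finset.single_le_sum
        (fun b _ => mul_nonneg (auxPowNonneg N hNnn p a b) (hvcnn b))
        (Finset.mem_univ i0)
    have h2 := hNsub p a
    nlinarith [pow_pos hl p, mul_pos hp hi0]
  -- strict inequality at one point
  obtain ⟨p, hp1, i, hi⟩ := hstrict
  have hstricti : (N ^ p).mulVec vc i < l ^ p * vc i := by
    refine lt_of_le_of_lt (hcomp p i) ?_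
    rw [hvc i]; exact hi
  -- choose connectivity powers
  choose s hs1 hs2 using fun j : I => hirr j i
  -- strictness at every point at exponent s j + p
  have key : ∀ j : I, (N ^ (s j + p)).mulVec vc j < l ^ (s j + p) * vc j := by
    intro j
    rw [pow_add, ← Matrix.mulVec_mulVec]
    calc (N ^ (s j)).mulVec ((N ^ p).mulVec vc) j
        < ∑ a : I, (N ^ (s j)) j a * (l ^ p * vc a) := by
          refine Finset.sum_lt_sum
            (fun a _ => mul_le_mul_of_nonneg_left (hNsub p a)
              (auxPowNonneg N hNnn (s j) j a))
            ⟨i, Finset.mem_univ i, ?_⟩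
          exact mul_lt_mul_of_pos_left hstricti (hs2 j)
      _ = l ^ p * (N ^ (s j)).mulVec vc j := by
          simp only [Matrix.mulVec, dotProduct, Finset.mul_sum]
          exact Finset.sum_congr rfl fun a _ => by ring
      _ ≤ l ^ p * (l ^ (s j) * vc j) := by
          exact mul_le_mul_of_nonneg_left (hNsub (s j) j) (pow_nonneg hl.le p)
      _ = l ^ (s j + p) * vc j := by rw [pow_add]; ring
  -- a uniform exponent
  set Q : ℕ := Finset.univ.sup (fun j : I => s j + p) with hQdef
  have hQle : ∀ j : I, s j + p ≤ Q := fun j => hQdef ▸ Finset.le_sup (f := fun j : I => s j + p) (Finset.mem_univ j)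
  have hQ1 : 1 ≤ Q := le_trans (by omega : 1 ≤ s i0 + p) (hQle i0)
  have hQstrict : ∀ j : I, (N ^ Q).mulVec vc j < l ^ Q * vc j := by
    intro j
    have hd : Q = (s j + p) + (Q - (s j + p)) := by have := hQle j; omega
    rw [hd, pow_add, ← Matrix.mulVec_mulVec]
    set d := Q - (s j + p)
    calc (N ^ (s j + p)).mulVec ((N ^ d).mulVec vc) j
        ≤ ∑ a : I, (N ^ (s j + p)) j a * (l ^ d * vc a) := by
          refine Finset.sum_le_sum fun a _ =>
            mul_le_mul_of_nonneg_left (hNsub d a)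
              (auxPowNonneg N hNnn (s j + p) j a)
      _ = l ^ d * (N ^ (s j + p)).mulVec vc j := by
          simp only [Matrix.mulVec, dotProduct, Finset.mul_sum]
          exact Finset.sum_congr rfl fun a _ => by ring
      _ < l ^ d * (l ^ (s j + p) * vc j) :=
          mul_lt_mul_of_pos_left (key j) (pow_pos hl d)
      _ = l ^ (s j + p + d) * vc j := by rw [pow_add]; ring
  -- the uniform contraction constant
  set μ : ℝ := Finset.univ.sup' Finset.univ_nonempty
      (fun j : I => (N ^ Q).mulVec vc j / vc j) with hμdef
  have hμlt : μ < l ^ Q := by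
    rw [hμdef, Finset.sup'_lt_iff]
    intro j _
    rw [div_lt_iff₀ (hvcpos j)]
    calc (N ^ Q).mulVec vc j < l ^ Q * vc j := hQstrict j
      _ = l ^ Q * vc j := rfl
  have hμge : ∀ j : I, (N ^ Q).mulVec vc j ≤ μ * vc j := by
    intro j
    have := Finset.le_sup' (fun j : I => (N ^ Q).mulVec vc j / vc j)
      (Finset.mem_univ j)
    calc (N ^ Q).mulVec vc j = ((N ^ Q).mulVec vc j / vc j) * vc j :=
          (div_mul_cancel₀ _ (hvcpos j).ne').symm
      _ ≤ μ * vc j := mul_le_mul_of_nonneg_right this (hvcpos j).le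
  -- bound on every eigenvalue in the defining set
  set c : ℝ := (max μ 0) ^ ((Q : ℝ)⁻¹) with hcdef
  have hc0 : 0 ≤ c := Real.rpow_nonneg (le_max_right μ 0) _
  have hcQ : c ^ Q = max μ 0 := by
    rw [hcdef, ← Real.rpow_natCast ((max μ 0) ^ ((Q : ℝ)⁻¹)) Q,
      ← Real.rpow_mul (le_max_right μ 0)]
    rw [inv_mul_cancel₀ (Nat.cast_ne_zero.mpr (by omega) : (Q : ℝ) ≠ 0)]
    exact Real.rpow_one _
  have hclt : c < l := by
    by_contra hcl
    push_neg at hcl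
    have : l ^ Q ≤ c ^ Q := pow_le_pow_left₀ hl.le hcl Q
    rw [hcQ] at this
    have : max μ 0 < l ^ Q := max_lt hμlt (pow_pos hl Q)
    linarith
  have hub : ∀ r ∈ {r : ℝ | ∃ w : I → ℝ, w ≠ 0 ∧ (∀ a, 0 ≤ w a) ∧
      N.mulVec w = r • w}, r ≤ c := by
    rintro r ⟨w, hw0, hwnn, hweig⟩
    obtain ⟨i1, hi1⟩ : ∃ a : I, 0 < w a := by
      by_contra h; push_neg at h
      exact hw0 (funext fun a => le_antisymm (h a) (hwnn a))
    have hwpos : ∀ a : I, 0 < w a := by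
      intro a
      rcases (hwnn a).lt_or_eq with h | h
      · exact h
      · exfalso
        obtain ⟨q, hq1, hq⟩ := hirr a i1
        have heq : (N ^ q).mulVec w a = r ^ q * w a := by
          rw [auxEigPow N w r hweig q]; simp
        have hge : (N ^ q) a i1 * w i1 ≤ (N ^ q).mulVec w a :=
          Finset.single_le_sum
            (fun b _ => mul_nonneg (auxPowNonneg N hNnn q a b) (hwnn b))
            (Finset.mem_univ i1)
        rw [heq, ← h] at hge
        nlinarith [mul_pos hq hi1]
    have hr0 : 0 ≤ r := by
      have h1 : N.mulVec w i1 = r * w i1 := by rw [hweig]; simp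
      have h2 : 0 ≤ N.mulVec w i1 := auxMulVecNonneg N hNnn w hwnn i1
      nlinarith
    -- minimize vc / w
    obtain ⟨j, _, hj⟩ := Finset.exists_min_image Finset.univ
      (fun a : I => vc a / w a) Finset.univ_nonempty
    set t : ℝ := vc j / w j with htdef
    have htw : ∀ a : I, t * w a ≤ vc a := by
      intro a
      have h1 : t ≤ vc a / w a := hj a (Finset.mem_univ a)
      calc t * w a ≤ (vc a / w a) * w a :=
            mul_le_mul_of_nonneg_right h1 (hwpos a).le
        _ = vc a := div_mul_cancel₀ _ (hwpos a).ne'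
    have htj : t * w j = vc j := div_mul_cancel₀ _ (hwpos j).ne'
    have hlow : r ^ Q * vc j ≤ (N ^ Q).mulVec vc j := by
      have h1 : ∑ a : I, (N ^ Q) j a * (t * w a) ≤ (N ^ Q).mulVec vc j :=
        Finset.sum_le_sum fun a _ =>
          mul_le_mul_of_nonneg_left (htw a) (auxPowNonneg N hNnn Q j a)
      have h2 : ∑ a : I, (N ^ Q) j a * (t * w a) = t * (N ^ Q).mulVec w j := by
        simp only [Matrix.mulVec, dotProduct, Finset.mul_sum]
        exact Finset.sum_congr rfl fun a _ => by ring
      have h3 : (N ^ Q).mulVec w j = r ^ Q * w j := by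
        rw [auxEigPow N w r hweig Q]; simp
      calc r ^ Q * vc j = t * (r ^ Q * w j) := by rw [← htj]; ring
        _ = ∑ a : I, (N ^ Q) j a * (t * w a) := by rw [h2, h3]
        _ ≤ (N ^ Q).mulVec vc j := h1
    have hrQ : r ^ Q ≤ μ := by
      have := le_trans hlow (hμge j)
      exact le_of_mul_le_mul_right (by linarith) (hvcpos j)
    by_contra hrc
    push_neg at hrc
    have : c ^ Q < r ^ Q := pow_lt_pow_left₀ hrc hc0 (by omega)
    rw [hcQ] at this
    have : μ ≤ max μ 0 := le_max_left μ 0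
    linarith [le_max_left μ 0]
  -- conclude
  unfold perronEig
  rcases Set.eq_empty_or_nonempty
    {r : ℝ | ∃ w : I → ℝ, w ≠ 0 ∧ (∀ a, 0 ≤ w a) ∧ N.mulVec w = r • w}
    with hS | hS
  · rw [hS, Real.sSup_empty]; exact hl
  · exact lt_of_le_of_lt (csSup_le hS hub) hclt
end

section
/- Let W be an irreducible nonnegative m×m matrix with Perron eigenvector u > 0 and eigenvalue λ > 0 (so Wu = λu), and let T be obtained from W by replacing the first row of W with its last (m-th) row. Assume u_m < u_1. Then Tu ≤ λu entrywise, (Tu)_1 < λu_1, and for every index 1 ≤ j ≤ m there exists a power p ≥ 1 such that (T^p u)_j < λ^p u_j. -/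
theorem stmt10 {m : ℕ} (W T : Matrix (Fin (m + 1)) (Fin (m + 1)) ℝ)
    (hW : ∀ i j, 0 ≤ W i j) (hirr : MatIrreducible W)
    (l : ℝ) (hl : 0 < l)
    (u : Fin (m + 1) → ℝ) (hu : ∀ i, 0 < u i)
    (heig : W.mulVec u = l • u)
    -- T is W with the first row replaced by the last row
    (hT1 : ∀ c, T 0 c = W (Fin.last m) c)
    (hT2 : ∀ j : Fin (m + 1), j ≠ 0 → ∀ c, T j c = W j c)
    (hlt : u (Fin.last m) < u 0) :
    (∀ i, T.mulVec u i ≤ l * u i) ∧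
    T.mulVec u 0 < l * u 0 ∧
    ∀ j : Fin (m + 1), ∃ p : ℕ, 1 ≤ p ∧ (T ^ p).mulVec u j < l ^ p * u j := by
  -- T has nonnegative entries
  have hTnn : ∀ i j, 0 ≤ T i j := by
    intro i j
    by_cases hi : i = 0
    · subst hi; rw [hT1]; exact hW _ _
    · rw [hT2 i hi]; exact hW _ _
  -- (Tu)_0 = l * u_last < l * u_0
  have hWu : ∀ i, W.mulVec u i = l * u i := by
    intro i; rw [heig]; rfl
  have strict0 : T.mulVec u 0 < l * u 0 := by
    have h0 : T.mulVec u 0 = W.mulVec u (Fin.last m) := by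
      simp only [Matrix.mulVec, dotProduct]
      exact Finset.sum_congr rfl (fun c _ => by rw [hT1])
    rw [h0, hWu]
    exact mul_lt_mul_of_pos_left hlt hl
  have hTu : ∀ i, T.mulVec u i ≤ l * u i := by
    intro i
    by_cases hi : i = 0
    · subst hi; exact le_of_lt strict0
    · have h0 : T.mulVec u i = W.mulVec u i := by
        simp only [Matrix.mulVec, dotProduct]
        exact Finset.sum_congr rfl (fun c _ => by rw [hT2 i hi])
      rw [h0, hWu]
  -- powers of T have nonnegative entries
  have hpownn : ∀ p : ℕ, ∀ i j, 0 ≤ (T ^ p) i j := by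
    intro p
    induction p with
    | zero =>
      intro i j
      simp only [pow_zero, Matrix.one_apply]
      split <;> norm_num
    | succ q ih =>
      intro i j
      rw [pow_succ, Matrix.mul_apply]
      exact Finset.sum_nonneg fun k _ => mul_nonneg (ih i k) (hTnn k j)
  -- (T^p u)_j ≤ l^p u_j
  have lemA : ∀ p : ℕ, ∀ j, (T ^ p).mulVec u j ≤ l ^ p * u j := by
    intro p
    induction p with
    | zero => intro j; simp [Matrix.mulVec_one]
    | succ q ih =>
      intro j
      have h1 : (T ^ (q + 1)).mulVec u j = T.mulVec ((T ^ q).mulVec u) j := by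
        rw [Matrix.mulVec_mulVec, ← pow_succ']
      rw [h1]
      have h2 : T.mulVec ((T ^ q).mulVec u) j ≤ T.mulVec (fun k => l ^ q * u k) j := by
        simp only [Matrix.mulVec, dotProduct]
        exact Finset.sum_le_sum fun k _ =>
          mul_le_mul_of_nonneg_left (ih k) (hTnn j k)
      refine h2.trans ?_
      have h3 : T.mulVec (fun k => l ^ q * u k) j = l ^ q * T.mulVec u j := by
        simp only [Matrix.mulVec, dotProduct, Finset.mul_sum]
        exact Finset.sum_congr rfl fun k _ => by ring
      rw [h3, pow_succ']
      calc l ^ q * T.mulVec u j ≤ l ^ q * (l * u j) :=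
            mul_le_mul_of_nonneg_left (hTu j) (pow_nonneg hl.le q)
        _ = l * l ^ q * u j := by ring
  -- powers of W have nonnegative entries
  have hWpow : ∀ p : ℕ, ∀ i j, 0 ≤ (W ^ p) i j := by
    intro p
    induction p with
    | zero =>
      intro i j
      simp only [pow_zero, Matrix.one_apply]
      split <;> norm_num
    | succ q ih =>
      intro i j
      rw [pow_succ, Matrix.mul_apply]
      exact Finset.sum_nonneg fun k _ => mul_nonneg (ih i k) (hW k j)
  -- reachability: from (W^q) j 0 > 0 deduce a T-power with (T^p) j 0 > 0
  have reach : ∀ q : ℕ, ∀ j : Fin (m + 1), 0 < (W ^ q) j 0 → ∃ p : ℕ, 0 < (T ^ p) j 0 := by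
    intro q
    induction q with
    | zero =>
      intro j hj
      simp only [pow_zero, Matrix.one_apply] at hj
      by_cases hj0 : j = 0
      · subst hj0
        exact ⟨0, by simp [Matrix.one_apply]⟩
      · simp [hj0] at hj
    | succ q ih =>
      intro j hj
      by_cases hj0 : j = 0
      · subst hj0
        exact ⟨0, by simp [Matrix.one_apply]⟩
      · rw [pow_succ', Matrix.mul_apply] at hj
        have hex : ∃ k, 0 < W j k * (W ^ q) k 0 := by
          by_contra hcon
          push_neg at hcon
          have : (∑ k, W j k * (W ^ q) k 0) ≤ 0 := Finset.sum_nonpos fun k _ => hcon k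
          linarith
        obtain ⟨k, hk⟩ := hex
        have h1 : 0 < W j k := by
          rcases mul_pos_iff.mp hk with ⟨ha, _⟩ | ⟨ha, hb⟩
          · exact ha
          · exact absurd hb (not_lt.mpr (hWpow q k 0))
        have h2 : 0 < (W ^ q) k 0 := by
          rcases mul_pos_iff.mp hk with ⟨_, hb⟩ | ⟨ha, hb⟩
          · exact hb
          · exact absurd hb (not_lt.mpr (hWpow q k 0))
        obtain ⟨p, hp⟩ := ih k h2
        refine ⟨p + 1, ?_⟩
        rw [pow_succ', Matrix.mul_apply]
        have hterm : 0 < T j k * (T ^ p) k 0 := by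
          rw [hT2 j hj0]
          exact mul_pos h1 hp
        refine Finset.sum_pos' (fun c _ => mul_nonneg (hTnn j c) (hpownn p c 0)) ⟨k, Finset.mem_univ k, hterm⟩
  refine ⟨hTu, strict0, ?_⟩
  intro j
  -- key step: if (T^p) j 0 > 0 then (T^(p+1) u)_j < l^(p+1) u_j
  have key : ∀ p : ℕ, 0 < (T ^ p) j 0 → (T ^ (p + 1)).mulVec u j < l ^ (p + 1) * u j := by
    intro p hp
    have h1 : (T ^ (p + 1)).mulVec u j = (T ^ p).mulVec (T.mulVec u) j := by
      rw [Matrix.mulVec_mulVec, ← pow_succ]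
    rw [h1]
    have h2 : (T ^ p).mulVec (T.mulVec u) j < (T ^ p).mulVec (fun k => l * u k) j := by
      simp only [Matrix.mulVec, dotProduct]
      refine Finset.sum_lt_sum (fun k _ => mul_le_mul_of_nonneg_left (hTu k) (hpownn p j k))
        ⟨0, Finset.mem_univ 0, ?_⟩
      exact mul_lt_mul_of_pos_left strict0 hp
    refine h2.trans_le ?_
    have h3 : (T ^ p).mulVec (fun k => l * u k) j = l * (T ^ p).mulVec u j := by
      simp only [Matrix.mulVec, dotProduct, Finset.mul_sum]
      exact Finset.sum_congr rfl fun k _ => by ring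
    rw [h3, pow_succ]
    calc l * (T ^ p).mulVec u j ≤ l * (l ^ p * u j) :=
          mul_le_mul_of_nonneg_left (lemA p j) hl.le
      _ = l ^ p * l * u j := by ring
  by_cases hj0 : j = 0
  · subst hj0
    refine ⟨1, le_refl 1, ?_⟩
    simpa using strict0
  · obtain ⟨q, _, hq⟩ := hirr j 0
    obtain ⟨p, hp⟩ := reach q j hq
    exact ⟨p + 1, Nat.le_add_left 1 p, key p hp⟩
end

section
/- Let M be an irreducible nonnegative k×k matrix with Perron eigenvalue λ and positive eigenvector v (Mv = λv), and let M̄ be an (k+l)×(k+l) nonnegative matrix of block form M̄ = [[M, 0],[A, B]] (upper-left block M, upper-right block zero, lower blocks A and B arbitrary nonnegative). Suppose w ∈ ℝ^{k+l} is a positive vector whose first k entries equal v and which satisfies M̄w ≤ λw entrywise. Then for every irreducible principal submatrix N of M̄ whose index set contains at least one of the last l indices at which M̄w is strictly less than λw in some power (i.e., (M̄^p w)_i < λ^p w_i for some p ≥ 1 and i in the index set of N), the Perron eigenvalue of N satisfies λ(N) < λ. -/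
/-!
Restricting `w` to the index set of `N` gives a positive vector `x` with `Nᵖ x ≤ λᵖ x` for all `p`,
because dropping the rows and columns outside `N` only loses nonnegative terms; the strict
deficiency of `M̄ᵖ w` at an index of `N` is inherited by `Nᵖ x`. Irreducibility of `N` spreads this
strict deficiency to every index at one common exponent `Q`, so `N^Q x ≤ ρ λ^Q x` for some `ρ < 1`.
Comparing any nonnegative eigenvector `u` of `N` with `x` at an index maximizing `u / x`
(the Collatz–Wielandt bound) then gives `r^Q ≤ ρ λ^Q` for every admissible eigenvalue `r`,
so the supremum `perronEig N` is at most `ρ^(1/Q) λ < λ`.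
-/

open Matrix

lemma exists_lt_one_mul_le_of_lt {ι : Type*} [Finite ι] {f g : ι → ℝ} (hf : 0 ≤ f)
    (hfg : ∀ i, f i < g i) : ∃ ρ, 0 ≤ ρ ∧ ρ < 1 ∧ ∀ i, f i ≤ ρ * g i := by
  rcases isEmpty_or_nonempty ι with _ | _
  · exact ⟨0, le_rfl, one_pos, isEmptyElim⟩
  have hg : ∀ i, 0 < g i := fun i => (hf i).trans_lt (hfg i)
  obtain ⟨j, hj⟩ := Finite.exists_max fun i => f i / g i
  refine ⟨f j / g j, div_nonneg (hf j) (hg j).le, (div_lt_one (hg j)).2 (hfg j), fun i => ?_⟩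
  rw [← div_le_iff₀ (hg i)]
  exact hj i

namespace Matrix

variable {ι : Type*} [Fintype ι] {A : Matrix ι ι ℝ}

lemma mulVec_mono_of_nonneg (hA : ∀ i j, 0 ≤ A i j) {x y : ι → ℝ} (hxy : x ≤ y) :
    A *ᵥ x ≤ A *ᵥ y :=
  fun i => Finset.sum_le_sum fun j _ => mul_le_mul_of_nonneg_left (hxy j) (hA i j)

lemma mulVec_nonneg_of_nonneg (hA : ∀ i j, 0 ≤ A i j) {x : ι → ℝ} (hx : 0 ≤ x) :
    0 ≤ A *ᵥ x := by
  simpa using mulVec_mono_of_nonneg hA hx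

lemma mulVec_apply_lt_of_nonneg (hA : ∀ i j, 0 ≤ A i j) {x y : ι → ℝ} (hxy : x ≤ y)
    {i j : ι} (hij : 0 < A i j) (hlt : x j < y j) : (A *ᵥ x) i < (A *ᵥ y) i :=
  Finset.sum_lt_sum (fun k _ => mul_le_mul_of_nonneg_left (hxy k) (hA i k))
    ⟨j, Finset.mem_univ j, mul_lt_mul_of_pos_left hlt hij⟩

lemma le_of_mulVec_eq_smul_of_mulVec_le_smul (hA : ∀ i j, 0 ≤ A i j) {x : ι → ℝ}
    (hx : ∀ i, 0 < x i) {μ : ℝ} (hAx : A *ᵥ x ≤ μ • x) {u : ι → ℝ} (hu₀ : 0 ≤ u) (hu : u ≠ 0)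
    {s : ℝ} (hAu : A *ᵥ u = s • u) : s ≤ μ := by
  obtain ⟨c, hc⟩ := Function.ne_iff.1 hu
  have : Nonempty ι := ⟨c⟩
  obtain ⟨j, hj⟩ := Finite.exists_max fun i => u i / x i
  set t := u j / x j
  have hux : u ≤ t • x := fun i => by
    simpa only [Pi.smul_apply, smul_eq_mul, div_le_iff₀ (hx i)] using hj i
  have huj : u j = t * x j := (div_mul_cancel₀ _ (hx j).ne').symm
  have ht : 0 < t :=
    (div_pos ((hu₀ c).lt_of_ne (Ne.symm hc)) (hx c)).trans_le (hj c)
  have hchain : s * u j ≤ μ * u j :=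
    calc s * u j = (A *ᵥ u) j := by rw [hAu]; rfl
      _ ≤ (A *ᵥ (t • x)) j := mulVec_mono_of_nonneg hA hux j
      _ = t * (A *ᵥ x) j := by rw [mulVec_smul]; rfl
      _ ≤ t * (μ * x j) := mul_le_mul_of_nonneg_left (hAx j) ht.le
      _ = μ * u j := by rw [huj]; ring
  exact le_of_mul_le_mul_right hchain (huj ▸ mul_pos ht (hx j))

variable [DecidableEq ι]

lemma pow_mulVec_eq_pow_smul {u : ι → ℝ} {s : ℝ} (h : A *ᵥ u = s • u) (q : ℕ) :
    A ^ q *ᵥ u = s ^ q • u := by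
  induction q with
  | zero => simp
  | succ q ih => rw [pow_succ', ← mulVec_mulVec, ih, mulVec_smul, h, smul_smul, pow_succ]

lemma pow_mulVec_le_pow_smul (hA : ∀ i j, 0 ≤ A i j) {x : ι → ℝ} {μ : ℝ} (hμ : 0 ≤ μ)
    (h : A *ᵥ x ≤ μ • x) (q : ℕ) : A ^ q *ᵥ x ≤ μ ^ q • x := by
  induction q with
  | zero => simp
  | succ q ih =>
    calc A ^ (q + 1) *ᵥ x = A *ᵥ (A ^ q *ᵥ x) := by rw [pow_succ', mulVec_mulVec]
      _ ≤ A *ᵥ (μ ^ q • x) := mulVec_mono_of_nonneg hA ih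
      _ = μ ^ q • (A *ᵥ x) := mulVec_smul _ _ _
      _ ≤ μ ^ q • (μ • x) := smul_le_smul_of_nonneg_left h (pow_nonneg hμ q)
      _ = μ ^ (q + 1) • x := by rw [smul_smul, pow_succ]

lemma submatrix_pow_mulVec_le {κ : Type*} [Fintype κ] [DecidableEq κ]
    (hA : ∀ i j, 0 ≤ A i j) {e : κ → ι} (he : Function.Injective e) {w : ι → ℝ} (hw : 0 ≤ w)
    (q : ℕ) : A.submatrix e e ^ q *ᵥ (w ∘ e) ≤ (A ^ q *ᵥ w) ∘ e := by
  induction q with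
  | zero => simp
  | succ q ih =>
    intro c
    have hterm : 0 ≤ fun j => A (e c) j * (A ^ q *ᵥ w) j := fun j =>
      mul_nonneg (hA _ j) (mulVec_nonneg_of_nonneg (pow_apply_nonneg hA q) hw j)
    calc (A.submatrix e e ^ (q + 1) *ᵥ (w ∘ e)) c
        = ∑ d, A (e c) (e d) * (A.submatrix e e ^ q *ᵥ (w ∘ e)) d := by
          rw [pow_succ', ← mulVec_mulVec]; rfl
      _ ≤ ∑ d, A (e c) (e d) * (A ^ q *ᵥ w) (e d) :=
          Finset.sum_le_sum fun d _ => mul_le_mul_of_nonneg_left (ih d) (hA _ _)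
      _ = ∑ j ∈ Finset.univ.map ⟨e, he⟩, A (e c) j * (A ^ q *ᵥ w) j := by
          rw [Finset.sum_map]; rfl
      _ ≤ ∑ j, A (e c) j * (A ^ q *ᵥ w) j := Finset.sum_le_univ_sum_of_nonneg hterm
      _ = ((A ^ (q + 1) *ᵥ w) ∘ e) c := by rw [pow_succ', ← mulVec_mulVec]; rfl

section StrictDeficiency

variable {N : Matrix ι ι ℝ} (hN : ∀ i j, 0 ≤ N i j) {x : ι → ℝ} {lam : ℝ} (hlam : 0 < lam)
  (hNx : N *ᵥ x ≤ lam • x)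
include hN hlam hNx

lemma pow_add_mulVec_apply_lt {p : ℕ} {i : ι} (hi : (N ^ p *ᵥ x) i < lam ^ p * x i) (s : ℕ) :
    (N ^ (p + s) *ᵥ x) i < lam ^ (p + s) * x i :=
  calc (N ^ (p + s) *ᵥ x) i = (N ^ p *ᵥ (N ^ s *ᵥ x)) i := by rw [pow_add, mulVec_mulVec]
    _ ≤ (N ^ p *ᵥ (lam ^ s • x)) i :=
        mulVec_mono_of_nonneg (pow_apply_nonneg hN p) (pow_mulVec_le_pow_smul hN hlam.le hNx s) i
    _ = lam ^ s * (N ^ p *ᵥ x) i := by rw [mulVec_smul]; rfl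
    _ < lam ^ s * (lam ^ p * x i) := mul_lt_mul_of_pos_left hi (pow_pos hlam s)
    _ = lam ^ (p + s) * x i := by ring

lemma add_pow_mulVec_apply_lt {m p : ℕ} {c i : ι} (hci : 0 < (N ^ m) c i)
    (hi : (N ^ p *ᵥ x) i < lam ^ p * x i) :
    (N ^ (m + p) *ᵥ x) c < lam ^ (m + p) * x c :=
  calc (N ^ (m + p) *ᵥ x) c = (N ^ m *ᵥ (N ^ p *ᵥ x)) c := by rw [pow_add, mulVec_mulVec]
    _ < (N ^ m *ᵥ (lam ^ p • x)) c :=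
        mulVec_apply_lt_of_nonneg (pow_apply_nonneg hN m)
          (pow_mulVec_le_pow_smul hN hlam.le hNx p) hci hi
    _ = lam ^ p * (N ^ m *ᵥ x) c := by rw [mulVec_smul]; rfl
    _ ≤ lam ^ p * (lam ^ m * x c) := mul_le_mul_of_nonneg_left
        (pow_mulVec_le_pow_smul hN hlam.le hNx m c) (pow_nonneg hlam.le p)
    _ = lam ^ (m + p) * x c := by ring

lemma exists_pow_mulVec_lt_of_irreducible (hirr : MatIrreducible N) {p : ℕ} {i : ι}
    (hi : (N ^ p *ᵥ x) i < lam ^ p * x i) :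
    ∃ Q ≠ 0, ∀ c, (N ^ Q *ᵥ x) c < lam ^ Q * x c := by
  choose m hm hmpos using fun c => hirr c i
  have hle : ∀ c, m c ≤ ∑ d, m d := fun c =>
    Finset.single_le_sum (fun d _ => Nat.zero_le (m d)) (Finset.mem_univ c)
  refine ⟨∑ d, m d + p, by have := hm i; have := hle i; omega, fun c => ?_⟩
  have hQ : ∑ d, m d + p = m c + (p + (∑ d, m d - m c)) := by have := hle c; omega
  rw [hQ]
  exact add_pow_mulVec_apply_lt hN hlam hNx (hmpos c) (pow_add_mulVec_apply_lt hN hlam hNx hi _)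

end StrictDeficiency

end Matrix

lemma perronEig_lt_of_pow_mulVec_lt {ι : Type*} [Fintype ι] [DecidableEq ι]
    {N : Matrix ι ι ℝ} (hN : ∀ i j, 0 ≤ N i j) {x : ι → ℝ} (hx : ∀ i, 0 < x i) {lam : ℝ}
    (hlam : 0 < lam) {Q : ℕ} (hQ : Q ≠ 0) (hlt : ∀ i, (N ^ Q *ᵥ x) i < lam ^ Q * x i) :
    perronEig N < lam := by
  obtain ⟨ρ, hρ₀, hρ₁, hρ⟩ := exists_lt_one_mul_le_of_lt
    (mulVec_nonneg_of_nonneg (pow_apply_nonneg hN Q) fun i => (hx i).le) hlt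
  set c := ρ ^ (Q⁻¹ : ℝ) * lam
  have hc₀ : 0 ≤ c := mul_nonneg (Real.rpow_nonneg hρ₀ _) hlam.le
  have hcQ : c ^ Q = ρ * lam ^ Q := by rw [mul_pow, Real.rpow_inv_natCast_pow hρ₀ hQ]
  have hc : c < lam := by
    have : ρ ^ (Q⁻¹ : ℝ) < 1 := Real.rpow_lt_one hρ₀ hρ₁ (by positivity)
    simpa using mul_lt_mul_of_pos_right this hlam
  refine (Real.sSup_le ?_ hc₀).trans_lt hc
  rintro r ⟨u, hu, hu₀, hNu⟩
  have hrQ : r ^ Q ≤ c ^ Q := hcQ ▸ le_of_mulVec_eq_smul_of_mulVec_le_smul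
    (pow_apply_nonneg hN Q) hx (fun i => (hρ i).trans_eq (mul_assoc _ _ _).symm) hu₀ hu
    (pow_mulVec_eq_pow_smul hNu Q)
  rcases le_or_gt r 0 with hr | hr
  · exact hr.trans hc₀
  · exact (pow_le_pow_iff_left₀ hr.le hc₀ hQ).1 hrQ

theorem stmt12_general {k l : ℕ}
    (lam : ℝ) (hlam : 0 < lam)
    (Mbar : Matrix (Fin (k + l)) (Fin (k + l)) ℝ)
    (hMbar : ∀ i j, 0 ≤ Mbar i j)
    (w : Fin (k + l) → ℝ) (hw : ∀ i, 0 < w i)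
    (hsub : ∀ i, Mbar.mulVec w i ≤ lam * w i)
    -- an irreducible principal submatrix of Mbar
    (I : Finset (Fin (k + l)))
    (N : Matrix I I ℝ) (hNdef : ∀ a b : I, N a b = Mbar a b)
    (hirrN : MatIrreducible N)
    -- I contains one of the last l indices with a strict deficiency in some power
    (hstrict : ∃ p : ℕ, 1 ≤ p ∧ ∃ i ∈ I, k ≤ (i : ℕ) ∧
      (Mbar ^ p).mulVec w i < lam ^ p * w i) :
    perronEig N < lam := by
  obtain ⟨p, -, i, hiI, -, hi⟩ := hstrict
  obtain rfl : N = Mbar.submatrix Subtype.val Subtype.val := Matrix.ext hNdef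
  have hN : ∀ a b : I, 0 ≤ Mbar a b := fun a b => hMbar a b
  have hcomp := submatrix_pow_mulVec_le hMbar (Subtype.val_injective (p := (· ∈ I)))
    fun j => (hw j).le
  have hNx : Mbar.submatrix Subtype.val Subtype.val *ᵥ (w ∘ Subtype.val) ≤
      lam • (w ∘ Subtype.val) := fun c => by
    simpa using (hcomp 1 c).trans (by simpa using hsub c)
  obtain ⟨Q, hQ, hlt⟩ := exists_pow_mulVec_lt_of_irreducible hN hlam hNx hirrN
    (i := ⟨i, hiI⟩) ((hcomp p _).trans_lt hi)
  exact perronEig_lt_of_pow_mulVec_lt hN (fun c => hw c) hlam hQ hlt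

theorem stmt12 {k l : ℕ}
    (M : Matrix (Fin k) (Fin k) ℝ) (hM : ∀ i j, 0 ≤ M i j)
    (hirrM : MatIrreducible M)
    (lam : ℝ) (hlam : 0 < lam)
    (v : Fin k → ℝ) (hv : ∀ i, 0 < v i) (heig : M.mulVec v = lam • v)
    (Mbar : Matrix (Fin (k + l)) (Fin (k + l)) ℝ)
    (hMbar : ∀ i j, 0 ≤ Mbar i j)
    -- upper-left block of Mbar is M
    (hUL : ∀ a b : Fin k, Mbar (Fin.castAdd l a) (Fin.castAdd l b) = M a b)
    -- upper-right block of Mbar is zero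
    (hUR : ∀ (a : Fin k) (b : Fin l), Mbar (Fin.castAdd l a) (Fin.natAdd k b) = 0)
    (w : Fin (k + l) → ℝ) (hw : ∀ i, 0 < w i)
    -- the first k entries of w equal v
    (hwv : ∀ a : Fin k, w (Fin.castAdd l a) = v a)
    (hsub : ∀ i, Mbar.mulVec w i ≤ lam * w i)
    -- an irreducible principal submatrix of Mbar
    (I : Finset (Fin (k + l)))
    (N : Matrix I I ℝ) (hNdef : ∀ a b : I, N a b = Mbar a b)
    (hirrN : MatIrreducible N)
    -- I contains one of the last l indices with a strict deficiency in some power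
    (hstrict : ∃ p : ℕ, 1 ≤ p ∧ ∃ i ∈ I, k ≤ (i : ℕ) ∧
      (Mbar ^ p).mulVec w i < lam ^ p * w i) :
    perronEig N < lam :=
  stmt12_general lam hlam Mbar hMbar w hw hsub I N hNdef hirrN hstrict
end
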